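/- If X is a real Gaussian random variable with mean m and standard deviation σ > 0, then E[max(0, c - X)] = (c - m) · Φ(Z) + σ · φ(Z), where Z = (c - m)/σ, φ is the standard normal density, and Φ is the standard normal cumulative distribution function. -/

import Mathlib

noncomputable def stdNormalPdf (z : ℝ) : ℝ :=
  (1 / Real.sqrt (2 * Real.pi)) * Real.exp (-z ^ 2 / 2)

noncomputable def stdNormalCdf (z : ℝ) : ℝ :=
  ∫ s in Set.Iic z, stdNormalPdf s

open MeasureTheory ProbabilityTheory Real Filter Set NNReal ENNReal in
lemma gaussianPDFReal_zero_one (z : ℝ) :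
    ProbabilityTheory.gaussianPDFReal 0 1 z = stdNormalPdf z := by
  simp [ProbabilityTheory.gaussianPDFReal, stdNormalPdf, one_div]

open MeasureTheory Real in
lemma integrable_stdNormalPdf : MeasureTheory.Integrable stdNormalPdf := by
  have h : Integrable (fun z : ℝ => Real.exp (-(1/2) * z ^ 2)) :=
    integrable_exp_neg_mul_sq (by norm_num)
  have := h.const_mul (1 / Real.sqrt (2 * Real.pi))
  refine this.congr (Filter.Eventually.of_forall fun z => ?_)
  simp only [stdNormalPdf]
  ring_nf

open MeasureTheory Real in
lemma integrable_mul_stdNormalPdf :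
    MeasureTheory.Integrable (fun z : ℝ => z * stdNormalPdf z) := by
  have h : Integrable (fun z : ℝ => z * Real.exp (-(1/2) * z ^ 2)) :=
    integrable_mul_exp_neg_mul_sq (by norm_num)
  have := h.const_mul (1 / Real.sqrt (2 * Real.pi))
  refine this.congr (Filter.Eventually.of_forall fun z => ?_)
  simp only [stdNormalPdf]
  ring_nf

open MeasureTheory Real Filter Set in
lemma integral_Iic_mul_stdNormalPdf (a : ℝ) :
    ∫ z in Set.Iic a, z * stdNormalPdf z = -stdNormalPdf a := by
  have hderiv : ∀ x ∈ Iic a, HasDerivAt (fun z => -stdNormalPdf z)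
      (x * stdNormalPdf x) x := by
    intro x _
    have h1 : HasDerivAt (fun z : ℝ => -z ^ 2 / 2) (-x) x := by
      have := ((hasDerivAt_pow 2 x).neg).div_const 2
      refine this.congr_deriv ?_
      simp; ring
    have h2 := (h1.exp.const_mul (1 / Real.sqrt (2 * Real.pi))).neg
    refine h2.congr_deriv ?_
    simp only [stdNormalPdf]
    ring
  have hint : IntegrableOn (fun z : ℝ => z * stdNormalPdf z) (Iic a) :=
    integrable_mul_stdNormalPdf.integrableOn
  have htend : Tendsto (fun z => -stdNormalPdf z) atBot (nhds 0) := by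
    have hsq : Tendsto (fun z : ℝ => z ^ 2) atBot atTop := by
      have : (fun z : ℝ => z ^ 2) = (fun y : ℝ => y ^ 2) ∘ (fun z : ℝ => -z) := by
        funext z; simp
      rw [this]
      exact (tendsto_pow_atTop (by norm_num)).comp tendsto_neg_atBot_atTop
    have : Tendsto (fun z : ℝ => -z ^ 2 / 2) atBot atBot := by
      apply Tendsto.atBot_div_const (by norm_num)
      exact tendsto_neg_atBot_iff.mpr hsq
    have hexp := Real.tendsto_exp_atBot.comp this
    have h := hexp.const_mul (1 / Real.sqrt (2 * Real.pi))
    rw [mul_zero] at h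
    have : Tendsto stdNormalPdf atBot (nhds 0) :=
      h.congr fun z => by simp only [stdNormalPdf, Function.comp_apply]
    simpa using this.neg
  have := integral_Iic_of_hasDerivAt_of_tendsto' hderiv hint htend
  rw [this]; ring

open MeasureTheory ProbabilityTheory Real Filter Set NNReal ENNReal

theorem expected_improvement_closed_form
    {Ω : Type*} [MeasureTheory.MeasureSpace Ω]
    (P : MeasureTheory.Measure Ω) [MeasureTheory.IsProbabilityMeasure P]
    (X : Ω → ℝ) (m σ c : ℝ) (hσ : 0 < σ)
    (hX : MeasureTheory.Measure.map X P =
      ProbabilityTheory.gaussianReal m (⟨σ ^ 2, sq_nonneg σ⟩ : NNReal)) :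
    ∫ ω, max 0 (c - X ω) ∂P =
      (c - m) * stdNormalCdf ((c - m) / σ) + σ * stdNormalPdf ((c - m) / σ) := by
  have hσ0 : σ ≠ 0 := ne_of_gt hσ
  set v : ℝ≥0 := (⟨σ ^ 2, sq_nonneg σ⟩ : NNReal) with hv_def
  have hXm : AEMeasurable X P := aemeasurable_of_map_neZero (by rw [hX]; infer_instance)
  have hgcont : Continuous (fun x : ℝ => max 0 (c - x)) :=
    continuous_const.max (continuous_const.sub continuous_id)
  have h1 : ∫ ω, max 0 (c - X ω) ∂P = ∫ x, max 0 (c - x) ∂(gaussianReal m v) := by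
    rw [← hX]
    exact (integral_map hXm hgcont.aestronglyMeasurable).symm
  -- standardization
  have hmap : (gaussianReal m v).map (fun x => σ⁻¹ * (x + -m)) = gaussianReal 0 1 := by
    have hc : (fun x : ℝ => σ⁻¹ * (x + -m)) =
        (fun y : ℝ => σ⁻¹ * y) ∘ (fun x : ℝ => x + -m) := rfl
    rw [hc, ← Measure.map_map (measurable_const_mul _) (measurable_add_const _),
      gaussianReal_map_add_const, gaussianReal_map_const_mul]
    have hm0 : m + -m = 0 := by ring
    rw [hm0, mul_zero]
    congr 1
    ext
    push_cast
    field_simp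
    rfl
  have hg2cont : Continuous (fun z : ℝ => max 0 ((c - m) - σ * z)) :=
    continuous_const.max (continuous_const.sub (continuous_const.mul continuous_id))
  have h2 : ∫ x, max 0 (c - x) ∂(gaussianReal m v)
      = ∫ z, max 0 ((c - m) - σ * z) ∂(gaussianReal 0 1) := by
    rw [← hmap, integral_map (Measurable.aemeasurable (by fun_prop))
      hg2cont.aestronglyMeasurable]
    congr 1
    funext x
    congr 1
    field_simp
    ring
  -- withDensity
  have h3 : ∫ z, max 0 ((c - m) - σ * z) ∂(gaussianReal 0 1)
      = ∫ z, stdNormalPdf z * max 0 ((c - m) - σ * z) := by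
    rw [gaussianReal_of_var_ne_zero 0 one_ne_zero, gaussianPDF_def]
    have hmeas : Measurable (fun x : ℝ => (gaussianPDFReal 0 1 x).toNNReal) :=
      (measurable_gaussianPDFReal 0 1).real_toNNReal
    have heq : (fun x : ℝ => ENNReal.ofReal (gaussianPDFReal 0 1 x))
        = (fun x : ℝ => ((gaussianPDFReal 0 1 x).toNNReal : ℝ≥0∞)) := rfl
    rw [heq, integral_withDensity_eq_integral_smul hmeas]
    congr 1
    funext z
    rw [NNReal.smul_def, smul_eq_mul, Real.coe_toNNReal _ (gaussianPDFReal_nonneg 0 1 z),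
      gaussianPDFReal_zero_one]
  set Z := (c - m) / σ with hZ_def
  have h4 : ∫ z, stdNormalPdf z * max 0 ((c - m) - σ * z)
      = ∫ z in Iic Z, stdNormalPdf z * ((c - m) - σ * z) := by
    have h0 : ∀ z ∉ Iic Z, stdNormalPdf z * max 0 ((c - m) - σ * z) = 0 := by
      intro z hz
      have hz' : Z < z := not_le.mp hz
      have hneg : (c - m) - σ * z < 0 := by
        rw [sub_neg]
        rw [hZ_def, div_lt_iff₀ hσ] at hz'
        linarith [hz']
      rw [max_eq_left hneg.le, mul_zero]
    rw [← setIntegral_eq_integral_of_forall_compl_eq_zero h0]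
    refine setIntegral_congr_fun measurableSet_Iic fun z hz => ?_
    have hpos : 0 ≤ (c - m) - σ * z := by
      rw [sub_nonneg]
      rw [mem_Iic, hZ_def, le_div_iff₀ hσ] at hz
      linarith [hz]
    rw [max_eq_right hpos]
  have h5 : ∫ z in Iic Z, stdNormalPdf z * ((c - m) - σ * z)
      = (c - m) * stdNormalCdf Z - σ * ∫ z in Iic Z, z * stdNormalPdf z := by
    have heq : ∀ z : ℝ, stdNormalPdf z * ((c - m) - σ * z)
        = (c - m) * stdNormalPdf z - σ * (z * stdNormalPdf z) := fun z => by ring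
    simp_rw [heq]
    rw [integral_sub ((integrable_stdNormalPdf.const_mul _).integrableOn)
      ((integrable_mul_stdNormalPdf.const_mul _).integrableOn),
      integral_const_mul, integral_const_mul]
    rfl
  rw [h1, h2, h3, h4, h5, integral_Iic_mul_stdNormalPdf]
  ring
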